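/- arXiv:2002.11994 — 3 statements merged into one kernel-verified Lean document; each statement's English description precedes it below -/
import Mathlib

section
/- The relative entropy controls the squared deviation of the diffuse normal from ξ with weight ε|∇u|²: ∫_{ℝ^d} |n − ξ|² ε |∇u|² dx ≤ 12 E[u|ξ]. -/
open MeasureTheory Set
open scoped RealInnerProductSpace

noncomputable section

/-- `∇ψ` for `ψ(x) = ∫_0^{u x} √(2 W s) ds`, namely `√(2 W (u x)) ∇u(x)`. -/
def gradPsi {d : ℕ} (W : ℝ → ℝ) (u : EuclideanSpace ℝ (Fin d) → ℝ)
    (x : EuclideanSpace ℝ (Fin d)) : EuclideanSpace ℝ (Fin d) :=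
  Real.sqrt (2 * W (u x)) • gradient u x

/-- The relative entropy `E[u|ξ]`. -/
def relEntropy {d : ℕ} (ε : ℝ) (W : ℝ → ℝ) (u : EuclideanSpace ℝ (Fin d) → ℝ)
    (ξ : EuclideanSpace ℝ (Fin d) → EuclideanSpace ℝ (Fin d)) : ℝ :=
  ∫ x, (ε / 2 * ‖gradient u x‖ ^ 2 + ε⁻¹ * W (u x) - ⟪ξ x, gradPsi W u x⟫)

/-! The pointwise inequality behind the theorem: writing `a = |∇u|`, `w = √(2W(u))` and
`s = ξ · n ∈ [-1, 1]`, the entropy density is `ε a²/2 + w²/(2ε) - s a w`, which dominates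
`(1 - s) ε a² / 4`, while `|n - ξ|² ≤ 2 (1 - s)` because `|n| = 1 ≥ |ξ|`. -/

theorem norm_sub_sq_le_two_mul_one_sub_inner {E : Type*} [NormedAddCommGroup E]
    [InnerProductSpace ℝ E] {n ξ : E} (hn : ‖n‖ = 1) (hξ : ‖ξ‖ ≤ 1) :
    ‖n - ξ‖ ^ 2 ≤ 2 * (1 - ⟪ξ, n⟫) := by
  rw [norm_sub_sq_real, hn, real_inner_comm]
  nlinarith [norm_nonneg ξ]

theorem one_sub_mul_le_four_mul_entropy_density {ε W a s : ℝ} (hε : 0 < ε) (hW : 0 ≤ W)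
    (ha : 0 ≤ a) (hs : |s| ≤ 1) :
    (1 - s) * (ε * a ^ 2) ≤ 4 * (ε / 2 * a ^ 2 + ε⁻¹ * W - √(2 * W) * a * s) := by
  set w := √(2 * W)
  have hW_eq : W = w ^ 2 / 2 := by rw [Real.sq_sqrt (by positivity)]; ring
  have hw : 0 ≤ w := Real.sqrt_nonneg _
  rw [hW_eq, ← mul_le_mul_iff_right₀ hε]
  have hεε : ε * ε⁻¹ = 1 := mul_inv_cancel₀ hε.ne'
  obtain ⟨hs_ge, hs_le⟩ := abs_le.mp hs
  rcases le_total 0 s with hs0 | hs0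
  · -- `2ε · density - (1 - s) ε² a² / 2 = s (εa - w)² + (1 - s)(ε² a² / 2 + w²)`
    nlinarith [mul_nonneg hs0 (sq_nonneg (ε * a - w)),
      mul_nonneg (sub_nonneg.mpr hs_le) (sq_nonneg (ε * a)),
      mul_nonneg (sub_nonneg.mpr hs_le) (sq_nonneg w)]
  · nlinarith [mul_nonneg (mul_nonneg (neg_nonneg.mpr hs0) hε.le) (mul_nonneg ha hw),
      mul_nonneg (by linarith : (0:ℝ) ≤ 1 + s) (sq_nonneg (ε * a)), sq_nonneg w]

theorem tilt_mul_energy_le_twelve_mul_entropy_density {E : Type*} [NormedAddCommGroup E]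
    [InnerProductSpace ℝ E] {ε W : ℝ} {v n ξ : E} (hε : 0 < ε) (hW : 0 ≤ W)
    (hn : ‖n‖ = 1) (hv : v = ‖v‖ • n) (hξ : ‖ξ‖ ≤ 1) :
    ‖n - ξ‖ ^ 2 * (ε * ‖v‖ ^ 2) ≤
      12 * (ε / 2 * ‖v‖ ^ 2 + ε⁻¹ * W - ⟪ξ, √(2 * W) • v⟫) := by
  have hinner : ⟪ξ, √(2 * W) • v⟫ = √(2 * W) * ‖v‖ * ⟪ξ, n⟫ := by
    conv_lhs => rw [hv]
    rw [real_inner_smul_right, real_inner_smul_right, mul_assoc]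
  have hs : |⟪ξ, n⟫| ≤ 1 :=
    (abs_real_inner_le_norm ξ n).trans (by rw [hn, mul_one]; exact hξ)
  have hdensity := one_sub_mul_le_four_mul_entropy_density hε hW (norm_nonneg v) hs
  have htilt_nonneg : 0 ≤ (1 - ⟪ξ, n⟫) * (ε * ‖v‖ ^ 2) :=
    mul_nonneg (by linarith [(abs_le.mp hs).2]) (by positivity)
  rw [hinner]
  calc ‖n - ξ‖ ^ 2 * (ε * ‖v‖ ^ 2) ≤ 2 * (1 - ⟪ξ, n⟫) * (ε * ‖v‖ ^ 2) := by
        gcongr; exact norm_sub_sq_le_two_mul_one_sub_inner hn hξ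
    _ ≤ 12 * (ε / 2 * ‖v‖ ^ 2 + ε⁻¹ * W - √(2 * W) * ‖v‖ * ⟪ξ, n⟫) := by linarith

theorem eq_norm_smul_of_eq_normalize {E : Type*} [NormedAddCommGroup E] [NormedSpace ℝ E]
    {v n : E} (h : v ≠ 0 → n = ‖v‖⁻¹ • v) : v = ‖v‖ • n := by
  rcases eq_or_ne v 0 with rfl | hv
  · simp
  · rw [h hv, smul_smul, mul_inv_cancel₀ (norm_ne_zero_iff.mpr hv), one_smul]

theorem entropy_controls_tilt_energy_weight_general
    (d : ℕ) (ε : ℝ) (hε : 0 < ε)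
    (W : ℝ → ℝ) (hWnonneg : ∀ s, 0 ≤ W s)
    (u : EuclideanSpace ℝ (Fin d) → ℝ)
    (henergy : Integrable (fun x => ε / 2 * ‖gradient u x‖ ^ 2 + ε⁻¹ * W (u x)))
    (n : EuclideanSpace ℝ (Fin d) → EuclideanSpace ℝ (Fin d))
    (hn : ∀ x, ‖n x‖ = 1)
    (hn' : ∀ x, gradient u x ≠ 0 → n x = ‖gradient u x‖⁻¹ • gradient u x)
    (ξ : EuclideanSpace ℝ (Fin d) → EuclideanSpace ℝ (Fin d))
    (hξ : ∀ x, ‖ξ x‖ ≤ 1)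
    (hξψ : Integrable (fun x => ⟪ξ x, gradPsi W u x⟫)) :
    (∫ x, ‖n x - ξ x‖ ^ 2 * (ε * ‖gradient u x‖ ^ 2)) ≤ 12 * relEntropy ε W u ξ := by
  have hpointwise : ∀ x, ‖n x - ξ x‖ ^ 2 * (ε * ‖gradient u x‖ ^ 2) ≤
      12 * (ε / 2 * ‖gradient u x‖ ^ 2 + ε⁻¹ * W (u x) - ⟪ξ x, gradPsi W u x⟫) := fun x =>
    tilt_mul_energy_le_twelve_mul_entropy_density hε (hWnonneg (u x)) (hn x)
      (eq_norm_smul_of_eq_normalize (hn' x)) (hξ x)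
  calc (∫ x, ‖n x - ξ x‖ ^ 2 * (ε * ‖gradient u x‖ ^ 2))
      ≤ ∫ x, 12 * (ε / 2 * ‖gradient u x‖ ^ 2 + ε⁻¹ * W (u x) - ⟪ξ x, gradPsi W u x⟫) :=
        integral_mono_of_nonneg (ae_of_all _ fun x => by positivity)
          ((henergy.sub hξψ).const_mul 12) (ae_of_all _ hpointwise)
    _ = 12 * relEntropy ε W u ξ := integral_const_mul _ _

/-- The relative entropy controls the squared deviation of the diffuse normal from `ξ`
with weight `ε |∇u|²`. -/
theorem entropy_controls_tilt_energy_weight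
    (d : ℕ) (hd : 1 ≤ d) (ε : ℝ) (hε : 0 < ε)
    (W : ℝ → ℝ) (hW : Continuous W) (hWnonneg : ∀ s, 0 ≤ W s)
    (u : EuclideanSpace ℝ (Fin d) → ℝ) (hu : ContDiff ℝ 1 u)
    (henergy : Integrable (fun x => ε / 2 * ‖gradient u x‖ ^ 2 + ε⁻¹ * W (u x)))
    (n : EuclideanSpace ℝ (Fin d) → EuclideanSpace ℝ (Fin d))
    (hn : ∀ x, ‖n x‖ = 1)
    (hn' : ∀ x, gradient u x ≠ 0 → n x = ‖gradient u x‖⁻¹ • gradient u x)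
    (ξ : EuclideanSpace ℝ (Fin d) → EuclideanSpace ℝ (Fin d))
    (hξmeas : Measurable ξ) (hξ : ∀ x, ‖ξ x‖ ≤ 1)
    (hξψ : Integrable (fun x => ⟪ξ x, gradPsi W u x⟫)) :
    (∫ x, ‖n x - ξ x‖ ^ 2 * (ε * ‖gradient u x‖ ^ 2)) ≤ 12 * relEntropy ε W u ξ :=
  entropy_controls_tilt_energy_weight_general d ε hε W hWnonneg u henergy n hn hn' ξ hξ hξψ
end
end

section
/- The relative entropy controls the energy localized away from the interface: ∫_{ℝ^d} min{dist(x,I)², 1} ((ε/2)|∇u|² + ε^{-1} W(u)) dx ≤ (1 + 1/κ) E[u|ξ]. -/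
/-!
Pointwise, Young's inequality gives `|∇ψ| ≤ e` for the energy density `e`, so with `m` the truncated
squared distance the entropy density `e - ξ·∇ψ` dominates both `e - |∇ψ|` and `(1 - |ξ|) |∇ψ|`.
Splitting `m e = m (e - |∇ψ|) + m |∇ψ|` and using `m ≤ 1` on the first term and `κ m ≤ 1 - |ξ|` on
the second bounds `m e` by `(1 + 1/κ)` times the entropy density; integrate.
-/

open MeasureTheory Set
open scoped RealInnerProductSpace

noncomputable section

theorem sqrt_two_mul_mul_le {ε w : ℝ} (hε : 0 < ε) (hw : 0 ≤ w) (a : ℝ) :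
    √(2 * w) * a ≤ ε / 2 * a ^ 2 + ε⁻¹ * w := by
  have hsq : √(2 * w) ^ 2 = 2 * w := Real.sq_sqrt (by linarith)
  have hinv : ε⁻¹ * ε = 1 := inv_mul_cancel₀ hε.ne'
  nlinarith [mul_nonneg (inv_nonneg.mpr hε.le) (sq_nonneg (ε * a - √(2 * w)))]

theorem norm_gradPsi_le {d : ℕ} {ε : ℝ} (hε : 0 < ε) {W : ℝ → ℝ}
    {u : EuclideanSpace ℝ (Fin d) → ℝ} {x : EuclideanSpace ℝ (Fin d)} (hW : 0 ≤ W (u x)) :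
    ‖gradPsi W u x‖ ≤ ε / 2 * ‖gradient u x‖ ^ 2 + ε⁻¹ * W (u x) := by
  rw [gradPsi, norm_smul, Real.norm_of_nonneg (Real.sqrt_nonneg _)]
  exact sqrt_two_mul_mul_le hε hW _

theorem mul_le_one_add_inv_mul_sub_inner {F : Type*} [NormedAddCommGroup F]
    [InnerProductSpace ℝ F] {κ m e : ℝ} {ξ v : F} (hκ : 0 < κ) (hm₀ : 0 ≤ m) (hm₁ : m ≤ 1)
    (hmξ : κ * m ≤ 1 - ‖ξ‖) (hve : ‖v‖ ≤ e) :
    m * e ≤ (1 + 1 / κ) * (e - ⟪ξ, v⟫) := by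
  have hξ : ‖ξ‖ ≤ 1 := by nlinarith
  have hv : 0 ≤ ‖v‖ := norm_nonneg v
  have hinner : ⟪ξ, v⟫ ≤ ‖ξ‖ * ‖v‖ := real_inner_le_norm ξ v
  have hfar : m * (e - ‖v‖) ≤ e - ⟪ξ, v⟫ := by nlinarith
  have hnear : κ * (m * ‖v‖) ≤ e - ⟪ξ, v⟫ := by nlinarith [mul_le_mul_of_nonneg_right hmξ hv]
  have hnear' : m * ‖v‖ ≤ 1 / κ * (e - ⟪ξ, v⟫) := by
    rw [one_div_mul_eq_div, le_div_iff₀ hκ]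
    linarith
  calc m * e = m * (e - ‖v‖) + m * ‖v‖ := by ring
    _ ≤ (e - ⟪ξ, v⟫) + 1 / κ * (e - ⟪ξ, v⟫) := add_le_add hfar hnear'
    _ = (1 + 1 / κ) * (e - ⟪ξ, v⟫) := by ring

theorem entropy_controls_energy_away_from_interface_general
    (d : ℕ) (ε : ℝ) (hε : 0 < ε)
    (W : ℝ → ℝ) (hWnonneg : ∀ s, 0 ≤ W s)
    (u : EuclideanSpace ℝ (Fin d) → ℝ)
    (henergy : Integrable (fun x => ε / 2 * ‖gradient u x‖ ^ 2 + ε⁻¹ * W (u x)))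
    (ξ : EuclideanSpace ℝ (Fin d) → EuclideanSpace ℝ (Fin d))
    (hξψ : Integrable (fun x => ⟪ξ x, gradPsi W u x⟫))
    (I : Set (EuclideanSpace ℝ (Fin d)))
    (κ : ℝ) (hκ : κ ∈ Ioc (0:ℝ) 1)
    (hcoercive : ∀ x, κ * min (Metric.infDist x I ^ 2) 1 ≤ 1 - ‖ξ x‖) :
    (∫ x, min (Metric.infDist x I ^ 2) 1 *
        (ε / 2 * ‖gradient u x‖ ^ 2 + ε⁻¹ * W (u x)))
      ≤ (1 + 1 / κ) * relEntropy ε W u ξ := by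
  have hweight₀ : ∀ x, 0 ≤ min (Metric.infDist x I ^ 2) 1 := fun x =>
    le_min (by positivity) zero_le_one
  have hpointwise : ∀ x, min (Metric.infDist x I ^ 2) 1 *
      (ε / 2 * ‖gradient u x‖ ^ 2 + ε⁻¹ * W (u x)) ≤ (1 + 1 / κ) *
        (ε / 2 * ‖gradient u x‖ ^ 2 + ε⁻¹ * W (u x) - ⟪ξ x, gradPsi W u x⟫) := fun x =>
    mul_le_one_add_inv_mul_sub_inner hκ.1 (hweight₀ x) (min_le_right _ _) (hcoercive x)
      (norm_gradPsi_le hε (hWnonneg _))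
  have hweighted : Integrable (fun x => min (Metric.infDist x I ^ 2) 1 *
      (ε / 2 * ‖gradient u x‖ ^ 2 + ε⁻¹ * W (u x))) :=
    henergy.bdd_mul (c := 1)
      (((Metric.continuous_infDist_pt I).pow 2).min continuous_const).aestronglyMeasurable
      (ae_of_all _ fun x => by
        rw [Real.norm_of_nonneg (hweight₀ x)]
        exact min_le_right _ _)
  calc _ ≤ ∫ x, (1 + 1 / κ) *
        (ε / 2 * ‖gradient u x‖ ^ 2 + ε⁻¹ * W (u x) - ⟪ξ x, gradPsi W u x⟫) :=
        integral_mono hweighted ((henergy.sub hξψ).const_mul _) hpointwise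
    _ = (1 + 1 / κ) * relEntropy ε W u ξ := integral_const_mul _ _

/-- The relative entropy controls the energy localized away from the interface. -/
theorem entropy_controls_energy_away_from_interface
    (d : ℕ) (hd : 1 ≤ d) (ε : ℝ) (hε : 0 < ε)
    (W : ℝ → ℝ) (hW : Continuous W) (hWnonneg : ∀ s, 0 ≤ W s)
    (u : EuclideanSpace ℝ (Fin d) → ℝ) (hu : ContDiff ℝ 1 u)
    (henergy : Integrable (fun x => ε / 2 * ‖gradient u x‖ ^ 2 + ε⁻¹ * W (u x)))
    (n : EuclideanSpace ℝ (Fin d) → EuclideanSpace ℝ (Fin d))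
    (hn : ∀ x, ‖n x‖ = 1)
    (hn' : ∀ x, gradient u x ≠ 0 → n x = ‖gradient u x‖⁻¹ • gradient u x)
    (ξ : EuclideanSpace ℝ (Fin d) → EuclideanSpace ℝ (Fin d))
    (hξmeas : Measurable ξ) (hξ : ∀ x, ‖ξ x‖ ≤ 1)
    (hξψ : Integrable (fun x => ⟪ξ x, gradPsi W u x⟫))
    (I : Set (EuclideanSpace ℝ (Fin d))) (hIne : I.Nonempty) (hIcl : IsClosed I)
    (κ : ℝ) (hκ : κ ∈ Ioc (0:ℝ) 1)
    (hcoercive : ∀ x, κ * min (Metric.infDist x I ^ 2) 1 ≤ 1 - ‖ξ x‖) :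
    (∫ x, min (Metric.infDist x I ^ 2) 1 *
        (ε / 2 * ‖gradient u x‖ ^ 2 + ε⁻¹ * W (u x)))
      ≤ (1 + 1 / κ) * relEntropy ε W u ξ :=
  entropy_controls_energy_away_from_interface_general d ε hε W hWnonneg u henergy ξ hξψ I κ hκ
    hcoercive
end
end

section
/- Estimate of the term involving the Hessian of the velocity field tested with the diffuse normal: there exists a constant C = C(κ, Λ, δ) < ∞ such that ∫_{ℝ^d} |∇H : (n ⊗ n)| · |ε|∇u|² − |∇ψ|| dx ≤ C E[u|ξ]. -/
open MeasureTheory Set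
open scoped RealInnerProductSpace

noncomputable section

/-!
With `b = √(ε/2) |∇u|`, `c = √(W(u)/ε)` and `n` the diffuse normal, the relative entropy density
is `(b - c)² + 2bc (1 - ξ·n)`, while `|ε|∇u|² - |∇ψ|| = 2b |b - c|`. Within distance `δ` of `I`
we have `(ξ·∇)H = 0`, so `|∇H : n ⊗ n| ≤ Λ |n - ξ|` and `|n - ξ|² ≤ 2 (1 - ξ·n)`: the small
factor `|n - ξ|` is what makes `2b |b - c|` controllable. Farther away,
`1 - ξ·n ≥ 1 - |ξ| ≥ κ min(δ², 1)`, which controls the `bc` part of `2b |b - c| ≤ 6 (b - c)² + 2bc`.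
-/

section Scalar

variable {b c t : ℝ}

lemma two_mul_mul_abs_sub_le (b c : ℝ) : 2 * b * |b - c| ≤ 6 * (b - c) ^ 2 + 2 * (b * c) := by
  rcases le_total c b with h | h
  · rw [abs_of_nonneg (sub_nonneg.2 h)]; nlinarith [sq_nonneg (b - c), sq_nonneg c]
  · rw [abs_of_nonpos (sub_nonpos.2 h)]; nlinarith [sq_nonneg (b - c), sq_nonneg b]

lemma two_mul_mul_abs_sub_le_of_le {k : ℝ} (hb : 0 ≤ b) (hc : 0 ≤ c) (hk : 0 < k) (ht : k ≤ t) :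
    2 * b * |b - c| ≤ (6 + 2 / k) * ((b - c) ^ 2 + 2 * (b * c) * t) := by
  have hbc : 0 ≤ b * c := mul_nonneg hb hc
  have hbc_le : 2 * (b * c) ≤ 2 / k * (2 * (b * c) * t) := by
    rw [div_mul_eq_mul_div, le_div_iff₀ hk]
    nlinarith [mul_nonneg hbc (sub_nonneg.2 ht)]
  have : 0 ≤ 2 / k * (b - c) ^ 2 := by positivity
  have : 0 ≤ 6 * (2 * (b * c) * t) := mul_nonneg (by norm_num) (by nlinarith)
  nlinarith [two_mul_mul_abs_sub_le b c]

/- If `b ≤ 2c`, use `2rb|b - c| ≤ r²b² + (b - c)²` and `r²b² ≤ 2tb² ≤ 4tbc`; if `b > 2c`, then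
`b ≤ 2(b - c)` and `r ≤ 2` give `2rb|b - c| ≤ 8(b - c)²`. -/
lemma mul_two_mul_mul_abs_sub_le {r : ℝ} (hb : 0 ≤ b) (hc : 0 ≤ c) (ht : 0 ≤ t) (hr : r ≤ 2)
    (hrt : r ^ 2 ≤ 2 * t) : r * (2 * b * |b - c|) ≤ 8 * ((b - c) ^ 2 + 2 * (b * c) * t) := by
  have hbct : 0 ≤ b * c * t := by positivity
  rcases le_or_gt b (2 * c) with h | h
  · have h1 : 0 ≤ (b * r - |b - c|) ^ 2 := sq_nonneg _
    have h2 : |b - c| ^ 2 = (b - c) ^ 2 := sq_abs _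
    have h3 : b ^ 2 * r ^ 2 ≤ b ^ 2 * (2 * t) := by nlinarith [sq_nonneg b]
    have h4 : b ^ 2 * (2 * t) ≤ 2 * c * b * (2 * t) := by
      nlinarith [mul_nonneg (mul_nonneg (sub_nonneg.2 h) hb) ht]
    nlinarith
  · rw [abs_of_nonneg (by linarith : 0 ≤ b - c)]
    have h1 : 0 ≤ (2 - r) * (b * (b - c)) := mul_nonneg (by linarith) (by nlinarith)
    have h2 : 0 ≤ (b - 2 * c) * (b - c) := by nlinarith
    nlinarith

lemma sqrt_two_mul_eq {ε : ℝ} (hε : 0 < ε) (w : ℝ) :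
    √(2 * w) = 2 * (√(ε / 2) * √(w / ε)) := by
  rw [← Real.sqrt_mul (by positivity), show ε / 2 * (w / ε) = w / 2 by field_simp]
  calc √(2 * w) = √(2 ^ 2 * (w / 2)) := by ring_nf
    _ = 2 * √(w / 2) := by rw [Real.sqrt_mul (by norm_num), Real.sqrt_sq (by norm_num)]

end Scalar

section InnerProductSpace

variable {E : Type*} [NormedAddCommGroup E] [InnerProductSpace ℝ E] {ν ξ g : E}

lemma norm_sub_sq_le_two_mul_one_sub_inner_s12 (hν : ‖ν‖ = 1) (hξ : ‖ξ‖ ≤ 1) :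
    ‖ν - ξ‖ ^ 2 ≤ 2 * (1 - ⟪ξ, ν⟫) := by
  have : ‖ξ‖ ^ 2 ≤ 1 := pow_le_one₀ (norm_nonneg _) hξ
  rw [norm_sub_sq_real, hν, real_inner_comm]
  linarith

lemma inner_le_norm_of_norm_eq_one (hν : ‖ν‖ = 1) (ξ : E) : ⟪ξ, ν⟫ ≤ ‖ξ‖ := by
  simpa [hν] using real_inner_le_norm ξ ν

lemma abs_inner_apply_le_of_norm_eq_one {A : E →L[ℝ] E} {Λ : ℝ} (hA : ‖A‖ ≤ Λ) (hν : ‖ν‖ = 1)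
    (v : E) : |⟪A v, ν⟫| ≤ Λ * ‖v‖ := by
  simpa [hν] using (abs_real_inner_le_norm (A v) ν).trans (mul_le_mul_of_nonneg_right
    ((A.le_opNorm v).trans (mul_le_mul_of_nonneg_right hA (norm_nonneg v))) (norm_nonneg ν))

lemma energy_density_sub_inner_eq {ε w : ℝ} (hε : 0 < ε) (hw : 0 ≤ w) (hg : g = ‖g‖ • ν)
    (ξ : E) :
    ε / 2 * ‖g‖ ^ 2 + ε⁻¹ * w - ⟪ξ, √(2 * w) • g⟫ =
      (√(ε / 2) * ‖g‖ - √(w / ε)) ^ 2 + 2 * (√(ε / 2) * ‖g‖ * √(w / ε)) * (1 - ⟪ξ, ν⟫) := by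
  have hinner : ⟪ξ, g⟫ = ‖g‖ * ⟪ξ, ν⟫ := by
    conv_lhs => rw [hg]
    exact real_inner_smul_right _ _ _
  have hb := Real.sq_sqrt (by positivity : 0 ≤ ε / 2)
  have hc := Real.sq_sqrt (by positivity : 0 ≤ w / ε)
  rw [real_inner_smul_right, hinner, sqrt_two_mul_eq hε]
  linear_combination (-‖g‖ ^ 2) * hb - hc

lemma abs_sub_norm_sqrt_smul_eq {ε : ℝ} (hε : 0 < ε) (w : ℝ) (g : E) :
    |ε * ‖g‖ ^ 2 - ‖√(2 * w) • g‖| =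
      2 * (√(ε / 2) * ‖g‖) * |√(ε / 2) * ‖g‖ - √(w / ε)| := by
  have hb := Real.sq_sqrt (by positivity : 0 ≤ ε / 2)
  rw [norm_smul, Real.norm_of_nonneg (Real.sqrt_nonneg _), sqrt_two_mul_eq hε,
    ← abs_of_nonneg (by positivity : 0 ≤ 2 * (√(ε / 2) * ‖g‖)), ← abs_mul]
  congr 1
  linear_combination (-2 * ‖g‖ ^ 2) * hb

lemma abs_inner_apply_mul_le_energy_excess {A : E →L[ℝ] E} {Λ k ε w : ℝ} (hA : ‖A‖ ≤ Λ)
    (hε : 0 < ε) (hw : 0 ≤ w) (hν : ‖ν‖ = 1) (hg : g = ‖g‖ • ν) (hξ : ‖ξ‖ ≤ 1) (hk : 0 < k)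
    (hAξ : A ξ = 0 ∨ k ≤ 1 - ‖ξ‖) :
    |⟪A ν, ν⟫| * |ε * ‖g‖ ^ 2 - ‖√(2 * w) • g‖| ≤
      Λ * (8 + 2 / k) * (ε / 2 * ‖g‖ ^ 2 + ε⁻¹ * w - ⟪ξ, √(2 * w) • g⟫) := by
  rw [abs_sub_norm_sqrt_smul_eq hε, energy_density_sub_inner_eq hε hw hg]
  set b := √(ε / 2) * ‖g‖
  set c := √(w / ε)
  have hb : 0 ≤ b := by positivity
  have hc : 0 ≤ c := Real.sqrt_nonneg _
  have ht : 0 ≤ 1 - ⟪ξ, ν⟫ := sub_nonneg.2 ((inner_le_norm_of_norm_eq_one hν ξ).trans hξ)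
  have hΛ : 0 ≤ Λ := (norm_nonneg A).trans hA
  have hX : 0 ≤ 2 * b * |b - c| := by positivity
  rcases hAξ with hAξ | hfar
  · have hAν : |⟪A ν, ν⟫| ≤ Λ * ‖ν - ξ‖ := by
      simpa [hAξ] using abs_inner_apply_le_of_norm_eq_one hA hν (ν - ξ)
    have hr : ‖ν - ξ‖ ≤ 2 := (norm_sub_le _ _).trans (by linarith)
    calc |⟪A ν, ν⟫| * (2 * b * |b - c|) ≤ Λ * (‖ν - ξ‖ * (2 * b * |b - c|)) :=
          (mul_le_mul_of_nonneg_right hAν hX).trans_eq (mul_assoc _ _ _)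
      _ ≤ Λ * (8 * ((b - c) ^ 2 + 2 * (b * c) * (1 - ⟪ξ, ν⟫))) :=
          mul_le_mul_of_nonneg_left (mul_two_mul_mul_abs_sub_le hb hc ht hr
            (norm_sub_sq_le_two_mul_one_sub_inner_s12 hν hξ)) hΛ
      _ ≤ _ := by rw [mul_assoc Λ (8 + 2 / k)]; gcongr; linarith [div_pos two_pos hk]
  · have hAν : |⟪A ν, ν⟫| ≤ Λ := by simpa [hν] using abs_inner_apply_le_of_norm_eq_one hA hν ν
    have hkt : k ≤ 1 - ⟪ξ, ν⟫ := by linarith [inner_le_norm_of_norm_eq_one hν ξ]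
    calc |⟪A ν, ν⟫| * (2 * b * |b - c|) ≤ Λ * (2 * b * |b - c|) :=
          mul_le_mul_of_nonneg_right hAν hX
      _ ≤ Λ * ((6 + 2 / k) * ((b - c) ^ 2 + 2 * (b * c) * (1 - ⟪ξ, ν⟫))) :=
          mul_le_mul_of_nonneg_left (two_mul_mul_abs_sub_le_of_le hb hc hk hkt) hΛ
      _ ≤ _ := by rw [mul_assoc Λ (8 + 2 / k)]; gcongr; linarith

end InnerProductSpace

theorem velocity_hessian_term_estimate_general
    (κ Λ δ : ℝ) (hκ : κ ∈ Ioc (0:ℝ) 1) (hδ : 0 < δ) :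
    ∃ C : ℝ, ∀ d : ℕ, 1 ≤ d → ∀ ε : ℝ, 0 < ε →
    ∀ W : ℝ → ℝ, Continuous W → (∀ s, 0 ≤ W s) →
    ∀ u : EuclideanSpace ℝ (Fin d) → ℝ, ContDiff ℝ 1 u →
      Integrable (fun x => ε / 2 * ‖gradient u x‖ ^ 2 + ε⁻¹ * W (u x)) →
    ∀ n : EuclideanSpace ℝ (Fin d) → EuclideanSpace ℝ (Fin d),
      (∀ x, ‖n x‖ = 1) →
      (∀ x, gradient u x ≠ 0 → n x = ‖gradient u x‖⁻¹ • gradient u x) →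
    ∀ ξ : EuclideanSpace ℝ (Fin d) → EuclideanSpace ℝ (Fin d),
      Measurable ξ → (∀ x, ‖ξ x‖ ≤ 1) →
      Integrable (fun x => ⟪ξ x, gradPsi W u x⟫) →
    ∀ I : Set (EuclideanSpace ℝ (Fin d)), I.Nonempty → IsClosed I →
      (∀ x, κ * min (Metric.infDist x I ^ 2) 1 ≤ 1 - ‖ξ x‖) →
    ∀ H : EuclideanSpace ℝ (Fin d) → EuclideanSpace ℝ (Fin d), ContDiff ℝ 1 H →
      (∀ x, ‖fderiv ℝ H x‖ ≤ Λ) →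
      (∀ x, Metric.infDist x I ≤ δ → fderiv ℝ H x (ξ x) = 0) →
    (∫ x, |⟪fderiv ℝ H x (n x), n x⟫|
        * |ε * ‖gradient u x‖ ^ 2 - ‖gradPsi W u x‖|)
      ≤ C * relEntropy ε W u ξ := by
  set k := κ * min (δ ^ 2) 1
  have hk : 0 < k := mul_pos hκ.1 (lt_min (by positivity) one_pos)
  refine ⟨Λ * (8 + 2 / k), fun d _ ε hε W _ hW u _ hEint n hn hn_grad ξ _ hξ hξint I _ _ hξI
    H _ hHΛ hHξ => ?_⟩
  have hpt : ∀ x, |⟪fderiv ℝ H x (n x), n x⟫| * |ε * ‖gradient u x‖ ^ 2 - ‖gradPsi W u x‖| ≤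
      Λ * (8 + 2 / k) * (ε / 2 * ‖gradient u x‖ ^ 2 + ε⁻¹ * W (u x) - ⟪ξ x, gradPsi W u x⟫) := by
    intro x
    have hg : gradient u x = ‖gradient u x‖ • n x := by
      by_cases h : gradient u x = 0
      · simp [h]
      · rw [hn_grad x h, smul_smul, mul_inv_cancel₀ (norm_ne_zero_iff.2 h), one_smul]
    have hnear : fderiv ℝ H x (ξ x) = 0 ∨ k ≤ 1 - ‖ξ x‖ := by
      refine (le_or_gt (Metric.infDist x I) δ).imp (hHξ x) fun hfar => ?_
      exact (mul_le_mul_of_nonneg_left (min_le_min_right 1 (pow_le_pow_left₀ hδ.le hfar.le 2))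
        hκ.1.le).trans (hξI x)
    exact abs_inner_apply_mul_le_energy_excess (hHΛ x) hε (hW _) (hn x) hg (hξ x) hk hnear
  -- `n` need not be measurable: a non-integrable left side has integral `0`.
  exact (integral_mono_of_nonneg (ae_of_all _ fun x => by positivity)
    ((hEint.sub hξint).const_mul _) (ae_of_all _ hpt)).trans_eq (integral_const_mul _ _)

/-- Estimate of the term involving the Hessian of the velocity field tested with the diffuse
normal. The constant `C` depends only on `κ`, `Λ` and `δ`. -/
theorem velocity_hessian_term_estimate
    (κ Λ δ : ℝ) (hκ : κ ∈ Ioc (0:ℝ) 1) (hΛ : 0 ≤ Λ) (hδ : 0 < δ) :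
    ∃ C : ℝ, ∀ d : ℕ, 1 ≤ d → ∀ ε : ℝ, 0 < ε →
    ∀ W : ℝ → ℝ, Continuous W → (∀ s, 0 ≤ W s) →
    ∀ u : EuclideanSpace ℝ (Fin d) → ℝ, ContDiff ℝ 1 u →
      Integrable (fun x => ε / 2 * ‖gradient u x‖ ^ 2 + ε⁻¹ * W (u x)) →
    ∀ n : EuclideanSpace ℝ (Fin d) → EuclideanSpace ℝ (Fin d),
      (∀ x, ‖n x‖ = 1) →
      (∀ x, gradient u x ≠ 0 → n x = ‖gradient u x‖⁻¹ • gradient u x) →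
    ∀ ξ : EuclideanSpace ℝ (Fin d) → EuclideanSpace ℝ (Fin d),
      Measurable ξ → (∀ x, ‖ξ x‖ ≤ 1) →
      Integrable (fun x => ⟪ξ x, gradPsi W u x⟫) →
    ∀ I : Set (EuclideanSpace ℝ (Fin d)), I.Nonempty → IsClosed I →
      (∀ x, κ * min (Metric.infDist x I ^ 2) 1 ≤ 1 - ‖ξ x‖) →
    ∀ H : EuclideanSpace ℝ (Fin d) → EuclideanSpace ℝ (Fin d), ContDiff ℝ 1 H →
      (∀ x, ‖fderiv ℝ H x‖ ≤ Λ) →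
      (∀ x, Metric.infDist x I ≤ δ → fderiv ℝ H x (ξ x) = 0) →
    (∫ x, |⟪fderiv ℝ H x (n x), n x⟫|
        * |ε * ‖gradient u x‖ ^ 2 - ‖gradPsi W u x‖|)
      ≤ C * relEntropy ε W u ξ :=
  velocity_hessian_term_estimate_general κ Λ δ hκ hδ
end
end
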